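/- For n ≥ 1, the number of overpartitions π of n that contain at least one overlined part and for which the number of non-overlined parts of size ≥ the smallest overlined part is even, minus the number of such overpartitions for which that count is odd, equals p^o(n) - p^e(n), where p^o(n) (resp. p^e(n)) is the number of partitions of n whose largest part appears an odd (resp. even) number of times. -/

import Mathlib

/-!
Sign-reversing involution. Let `s` be the smallest overlined part of `π` and `t` the largest part
size exceeding `s`, if there is one. Toggling whether `t` is overlined (an overlined `t` becomes
plain, otherwise one plain `t` gets overlined) preserves `s` and the underlying partition, changes
`ℓ_{N≥O}` by one, and is an involution. At its fixed points `s` is the only overlined part and no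
part exceeds `s`, so removing the overline gives a partition whose largest part `s` occurs
`ℓ_{N≥O}(π) + 1` times; for `n ≥ 1` every partition of `n` arises this way exactly once.
-/

open scoped Classical

/-- An overpartition of `n`: a finite set of overlined part sizes (the first
occurrence of a size may be overlined, so overlined parts are distinct)
together with a multiset of non-overlined parts, all parts positive,
with total sum `n`. -/
structure Overpartition (n : ℕ) where
  overl : Finset ℕ
  plain : Multiset ℕ
  over_pos : ∀ x ∈ overl, 0 < x
  plain_pos : ∀ x ∈ plain, 0 < x
  sum_eq : (∑ x ∈ overl, x) + plain.sum = n

theorem Multiset.sup_mem_of_ne_zero {α : Type*} [LinearOrder α] [OrderBot α] {s : Multiset α}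
    (hs : s ≠ 0) : s.sup ∈ s := by
  induction s using Multiset.induction_on with
  | empty => exact absurd rfl hs
  | cons a s ih =>
    rw [Multiset.sup_cons]
    rcases eq_or_ne s 0 with rfl | hs₀
    · simp
    · exact sup_ind a s.sup (Multiset.mem_cons_self a s) (Multiset.mem_cons_of_mem (ih hs₀))

theorem Finset.min_le_coe_iff {α : Type*} [LinearOrder α] {s : Finset α} {a : α} :
    s.min ≤ a ↔ ∃ b ∈ s, b ≤ a := by
  rw [Finset.min_eq_inf_withTop, Finset.inf_le_iff (WithTop.coe_lt_top a)]
  simp only [WithTop.coe_le_coe]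

theorem Finset.min_insert_of_min_lt {α : Type*} [LinearOrder α] {s : Finset α} {a : α}
    (h : s.min < a) : (insert a s).min = s.min := by
  rw [Finset.min_insert, min_eq_right h.le]

theorem Finset.min_erase_of_min_lt {α : Type*} [LinearOrder α] [DecidableEq α] {s : Finset α}
    {a : α} (h : s.min < a) : (s.erase a).min = s.min := by
  obtain ⟨b, hb⟩ := WithTop.ne_top_iff_exists.mp h.ne_top
  refine le_antisymm ?_ (Finset.min_mono (Finset.erase_subset a s))
  rw [← hb] at h ⊢
  refine Finset.min_le (Finset.mem_erase.mpr ⟨?_, Finset.mem_of_min hb.symm⟩)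
  rintro rfl
  exact lt_irrefl _ h

theorem Nat.card_eq_card_and_add_card_and_not {α : Type*} [Finite α] (P Q : α → Prop) :
    Nat.card {x // P x} = Nat.card {x // P x ∧ Q x} + Nat.card {x // P x ∧ ¬Q x} := by
  rw [← Nat.card_sum]
  exact Nat.card_congr <| (Equiv.sumCompl fun x : {x // P x} => Q x).symm.trans <|
    Equiv.sumCongr (Equiv.subtypeSubtypeEquivSubtypeInter P Q)
      (Equiv.subtypeSubtypeEquivSubtypeInter P fun x => ¬Q x)

theorem Nat.Partition.sup_mem_parts {n : ℕ} (p : n.Partition) (hn : n ≠ 0) :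
    p.parts.sup ∈ p.parts :=
  Multiset.sup_mem_of_ne_zero fun h => hn (by rw [← p.parts_sum, h, Multiset.sum_zero])

namespace Overpartition

variable {n : ℕ}

theorem ext {π σ : Overpartition n} (hO : π.overl = σ.overl) (hN : π.plain = σ.plain) :
    π = σ := by
  cases π; cases σ; simp_all

def toPartition (π : Overpartition n) : n.Partition where
  parts := π.overl.val + π.plain
  parts_pos {x} hx := (Multiset.mem_add.mp hx).elim (π.over_pos x) (π.plain_pos x)
  parts_sum := by rw [Multiset.sum_add, Finset.sum_val]; exact π.sum_eq

instance : Finite (Overpartition n) :=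
  Finite.of_injective
    (fun π => (⟨π.toPartition, π.overl, Finset.mem_powerset.mpr fun x hx =>
        Multiset.mem_toFinset.mpr (Multiset.mem_add.mpr (Or.inl hx))⟩ :
      Σ p : n.Partition, p.parts.toFinset.powerset))
    fun π σ h => by
      have hO : π.overl = σ.overl := congrArg (fun z => (z.2 : Finset ℕ)) h
      have hparts : π.overl.val + π.plain = σ.overl.val + σ.plain :=
        congrArg (fun z => z.1.parts) h
      exact ext hO (by rwa [hO, add_right_inj] at hparts)

def movable (π : Overpartition n) : Finset ℕ :=
  π.toPartition.parts.toFinset.filter fun t => π.overl.min < t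

theorem mem_movable {π : Overpartition n} {t : ℕ} :
    t ∈ π.movable ↔ t ∈ π.toPartition.parts ∧ π.overl.min < t := by
  rw [movable, Finset.mem_filter, Multiset.mem_toFinset]

def ellNO (π : Overpartition n) : ℕ :=
  Multiset.card (π.plain.filter fun x => ∃ y ∈ π.overl, y ≤ x)

theorem ellNO_eq (π : Overpartition n) :
    π.ellNO = Multiset.card (π.plain.filter fun x : ℕ => π.overl.min ≤ (x : WithTop ℕ)) :=
  congrArg _ (Multiset.filter_congr fun _ _ => Finset.min_le_coe_iff.symm)

def unoverline (π : Overpartition n) (t : ℕ) (ht : t ∈ π.overl) : Overpartition n where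
  overl := π.overl.erase t
  plain := t ::ₘ π.plain
  over_pos x hx := π.over_pos x (Finset.mem_of_mem_erase hx)
  plain_pos x hx := (Multiset.mem_cons.mp hx).elim (fun h => h ▸ π.over_pos t ht) (π.plain_pos x)
  sum_eq := by rw [Multiset.sum_cons, ← add_assoc, Finset.sum_erase_add _ _ ht]; exact π.sum_eq

def overline (π : Overpartition n) (t : ℕ) (ht : t ∈ π.plain) (ht' : t ∉ π.overl) :
    Overpartition n where
  overl := insert t π.overl
  plain := π.plain.erase t
  over_pos x hx := (Finset.mem_insert.mp hx).elim (fun h => h ▸ π.plain_pos t ht) (π.over_pos x)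
  plain_pos x hx := π.plain_pos x (Multiset.mem_of_mem_erase hx)
  sum_eq := by
    rw [Finset.sum_insert ht', add_comm t, add_assoc, Multiset.sum_erase ht]
    exact π.sum_eq

def toggle (π : Overpartition n) (t : ℕ) (h : t ∈ π.toPartition.parts) : Overpartition n :=
  if ht : t ∈ π.overl then π.unoverline t ht
  else π.overline t ((Multiset.mem_add.mp h).resolve_left ht) ht

section Toggle

variable {π : Overpartition n} {t : ℕ}

theorem toPartition_unoverline (ht : t ∈ π.overl) :
    (π.unoverline t ht).toPartition = π.toPartition := by
  ext1
  change (π.overl.erase t).val + t ::ₘ π.plain = π.overl.val + π.plain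
  rw [Finset.erase_val, Multiset.add_cons, ← Multiset.cons_add,
    Multiset.cons_erase (Finset.mem_val.mpr ht)]

theorem toPartition_overline (ht : t ∈ π.plain) (ht' : t ∉ π.overl) :
    (π.overline t ht ht').toPartition = π.toPartition := by
  ext1
  change (insert t π.overl).val + π.plain.erase t = π.overl.val + π.plain
  rw [Finset.insert_val_of_notMem ht', Multiset.cons_add, ← Multiset.add_cons,
    Multiset.cons_erase ht]

theorem overline_unoverline (ht : t ∈ π.overl) :
    (π.unoverline t ht).overline t (Multiset.mem_cons_self t π.plain)
      (Finset.notMem_erase t π.overl) = π :=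
  ext (Finset.insert_erase ht) (Multiset.erase_cons_head t π.plain)

theorem unoverline_overline (ht : t ∈ π.plain) (ht' : t ∉ π.overl) :
    (π.overline t ht ht').unoverline t (Finset.mem_insert_self t π.overl) = π :=
  ext (Finset.erase_insert ht') (Multiset.cons_erase ht)

theorem toPartition_toggle (h : t ∈ π.toPartition.parts) :
    (π.toggle t h).toPartition = π.toPartition := by
  unfold toggle
  split_ifs with ht
  · exact toPartition_unoverline ht
  · exact toPartition_overline _ ht

theorem toggle_toggle (h : t ∈ π.toPartition.parts) (h' : t ∈ (π.toggle t h).toPartition.parts) :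
    (π.toggle t h).toggle t h' = π := by
  by_cases ht : t ∈ π.overl
  · have hto : π.toggle t h = π.unoverline t ht := dif_pos ht
    simp only [hto] at h' ⊢
    exact (dif_neg (Finset.notMem_erase t π.overl)).trans (overline_unoverline ht)
  · have hto : π.toggle t h = π.overline t ((Multiset.mem_add.mp h).resolve_left ht) ht :=
      dif_neg ht
    simp only [hto] at h' ⊢
    exact (dif_pos (Finset.mem_insert_self t π.overl)).trans (unoverline_overline _ ht)

variable (hlt : π.overl.min < t)
include hlt

theorem overl_min_unoverline (ht : t ∈ π.overl) : (π.unoverline t ht).overl.min = π.overl.min :=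
  Finset.min_erase_of_min_lt hlt

theorem overl_min_overline (ht : t ∈ π.plain) (ht' : t ∉ π.overl) :
    (π.overline t ht ht').overl.min = π.overl.min :=
  Finset.min_insert_of_min_lt hlt

theorem ellNO_unoverline (ht : t ∈ π.overl) : (π.unoverline t ht).ellNO = π.ellNO + 1 := by
  rw [ellNO_eq, ellNO_eq, overl_min_unoverline hlt]
  exact (congrArg Multiset.card (Multiset.filter_cons_of_pos
    (p := fun x : ℕ => π.overl.min ≤ (x : WithTop ℕ)) _ hlt.le)).trans (Multiset.card_cons _ _)

theorem ellNO_overline (ht : t ∈ π.plain) (ht' : t ∉ π.overl) :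
    (π.overline t ht ht').ellNO + 1 = π.ellNO := by
  have h := ellNO_unoverline (π := π.overline t ht ht')
    ((overl_min_overline hlt ht ht').symm ▸ hlt) (Finset.mem_insert_self t π.overl)
  exact (unoverline_overline ht ht' ▸ h).symm

theorem overl_min_toggle (h : t ∈ π.toPartition.parts) :
    (π.toggle t h).overl.min = π.overl.min := by
  unfold toggle
  split_ifs with ht
  · exact overl_min_unoverline hlt ht
  · exact overl_min_overline hlt _ ht

theorem even_ellNO_toggle (h : t ∈ π.toPartition.parts) :
    Even (π.toggle t h).ellNO ↔ ¬Even π.ellNO := by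
  unfold toggle
  split_ifs with ht
  · rw [ellNO_unoverline hlt ht, Nat.even_add_one]
  · rw [← ellNO_overline hlt _ ht, Nat.even_add_one, not_not]

theorem movable_toggle (h : t ∈ π.toPartition.parts) : (π.toggle t h).movable = π.movable := by
  rw [movable, movable, toPartition_toggle, overl_min_toggle hlt]

end Toggle

def toggleMax (π : Overpartition n) : Overpartition n :=
  if h : π.movable.Nonempty then π.toggle _ (mem_movable.mp (π.movable.max'_mem h)).1 else π

section ToggleMax

variable {π : Overpartition n}

theorem toggleMax_of_nonempty (h : π.movable.Nonempty) :
    π.toggleMax = π.toggle _ (mem_movable.mp (π.movable.max'_mem h)).1 :=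
  dif_pos h

theorem movable_toggleMax (π : Overpartition n) : π.toggleMax.movable = π.movable := by
  by_cases h : π.movable.Nonempty
  · rw [toggleMax_of_nonempty h]
    exact movable_toggle (mem_movable.mp (π.movable.max'_mem h)).2 _
  · rw [toggleMax, dif_neg h]

theorem overl_min_toggleMax (π : Overpartition n) : π.toggleMax.overl.min = π.overl.min := by
  by_cases h : π.movable.Nonempty
  · rw [toggleMax_of_nonempty h]
    exact overl_min_toggle (mem_movable.mp (π.movable.max'_mem h)).2 _
  · rw [toggleMax, dif_neg h]

theorem even_ellNO_toggleMax (h : π.movable.Nonempty) :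
    Even π.toggleMax.ellNO ↔ ¬Even π.ellNO := by
  rw [toggleMax_of_nonempty h]
  exact even_ellNO_toggle (mem_movable.mp (π.movable.max'_mem h)).2 _

theorem toggleMax_involutive : Function.Involutive (toggleMax (n := n)) := by
  intro π
  by_cases h : π.movable.Nonempty
  · have hm := π.movable_toggleMax
    rw [toggleMax_of_nonempty (hm ▸ h)]
    simp only [hm]
    generalize_proofs h'
    revert h'
    rw [toggleMax_of_nonempty h]
    exact toggle_toggle _
  · have hπ : π.toggleMax = π := dif_neg h
    rw [hπ, hπ]

theorem overl_toggleMax_nonempty_iff : π.toggleMax.overl.Nonempty ↔ π.overl.Nonempty := by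
  rw [Finset.nonempty_iff_ne_empty, Finset.nonempty_iff_ne_empty, Ne, Ne, ← Finset.min_eq_top,
    ← Finset.min_eq_top, overl_min_toggleMax]

theorem card_movable_even_eq_card_movable_odd :
    Nat.card {π : Overpartition n // (π.overl.Nonempty ∧ Even π.ellNO) ∧ π.movable.Nonempty} =
      Nat.card {π : Overpartition n // (π.overl.Nonempty ∧ Odd π.ellNO) ∧ π.movable.Nonempty} :=
  Nat.card_congr <| (toggleMax_involutive.toPerm _).subtypeEquiv fun π => by
    rw [Function.Involutive.coe_toPerm, movable_toggleMax, overl_toggleMax_nonempty_iff,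
      ← Nat.not_even_iff_odd]
    by_cases h : π.movable.Nonempty
    · rw [even_ellNO_toggleMax h, not_not]
    · simp only [h, and_false]

end ToggleMax

section FixedPoints

variable {π : Overpartition n}

theorem exists_overl_eq_singleton (hov : π.overl.Nonempty) (hfix : ¬π.movable.Nonempty) :
    ∃ s, π.overl = {s} ∧ ∀ x ∈ π.plain, x ≤ s := by
  have hle : ∀ x ∈ π.toPartition.parts, x ≤ π.overl.min' hov := fun x hx => by
    by_contra hlt
    refine hfix ⟨x, mem_movable.mpr ⟨hx, ?_⟩⟩
    rw [← Finset.coe_min' hov]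
    exact WithTop.coe_lt_coe.mpr (not_le.mp hlt)
  refine ⟨_, Finset.eq_singleton_iff_unique_mem.mpr ⟨Finset.min'_mem _ hov, fun y hy => ?_⟩,
    fun x hx => hle x (Multiset.mem_add.mpr (Or.inr hx))⟩
  exact le_antisymm (hle y (Multiset.mem_add.mpr (Or.inl hy))) (Finset.min'_le _ _ hy)

section

variable {s : ℕ} (hs : π.overl = {s}) (hle : ∀ x ∈ π.plain, x ≤ s)
include hs

theorem toPartition_parts_of_overl_eq : π.toPartition.parts = s ::ₘ π.plain := by
  change π.overl.val + π.plain = _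
  rw [hs, Finset.singleton_val, Multiset.singleton_add]

include hle

theorem sup_toPartition_parts : π.toPartition.parts.sup = s := by
  rw [toPartition_parts_of_overl_eq hs, Multiset.sup_cons, sup_eq_left, Multiset.sup_le]
  exact hle

theorem count_sup_toPartition_parts :
    π.toPartition.parts.count π.toPartition.parts.sup = π.ellNO + 1 := by
  rw [sup_toPartition_parts hs hle, toPartition_parts_of_overl_eq hs, Multiset.count_cons_self,
    ellNO_eq, hs, Finset.min_singleton, Multiset.count_eq_card_filter_eq]
  congr 2
  exact Multiset.filter_congr fun x hx =>
    ⟨fun h => h ▸ le_rfl, fun h => le_antisymm (WithTop.coe_le_coe.mp h) (hle x hx)⟩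

end

def ofPartition (hn : n ≠ 0) (p : n.Partition) : Overpartition n where
  overl := {p.parts.sup}
  plain := p.parts.erase p.parts.sup
  over_pos x hx := Finset.mem_singleton.mp hx ▸ p.parts_pos (p.sup_mem_parts hn)
  plain_pos x hx := p.parts_pos (Multiset.mem_of_mem_erase hx)
  sum_eq := by rw [Finset.sum_singleton, Multiset.sum_erase (p.sup_mem_parts hn), p.parts_sum]

theorem toPartition_ofPartition (hn : n ≠ 0) (p : n.Partition) :
    (ofPartition hn p).toPartition = p :=
  Nat.Partition.ext <| (toPartition_parts_of_overl_eq rfl).trans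
    (Multiset.cons_erase (p.sup_mem_parts hn))

theorem not_movable_nonempty_ofPartition (hn : n ≠ 0) (p : n.Partition) :
    ¬(ofPartition hn p).movable.Nonempty := by
  rintro ⟨t, ht⟩
  rw [mem_movable, toPartition_ofPartition] at ht
  exact not_lt.mpr (Multiset.le_sup ht.1) (WithTop.coe_lt_coe.mp ht.2)

theorem ofPartition_toPartition (hn : n ≠ 0) (hov : π.overl.Nonempty)
    (hfix : ¬π.movable.Nonempty) : ofPartition hn π.toPartition = π := by
  obtain ⟨s, hs, hle⟩ := exists_overl_eq_singleton hov hfix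
  refine ext ?_ ?_
  · change {π.toPartition.parts.sup} = π.overl
    rw [sup_toPartition_parts hs hle, hs]
  · change π.toPartition.parts.erase π.toPartition.parts.sup = π.plain
    rw [sup_toPartition_parts hs hle, toPartition_parts_of_overl_eq hs, Multiset.erase_cons_head]

def fixedEquiv (hn : n ≠ 0) :
    {π : Overpartition n // π.overl.Nonempty ∧ ¬π.movable.Nonempty} ≃ n.Partition where
  toFun π := π.1.toPartition
  invFun p := ⟨ofPartition hn p, Finset.singleton_nonempty _, not_movable_nonempty_ofPartition hn p⟩
  left_inv π := Subtype.ext (ofPartition_toPartition hn π.2.1 π.2.2)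
  right_inv := toPartition_ofPartition hn

theorem card_fixed_eq (hn : n ≠ 0) (P : ℕ → Prop) :
    Nat.card {π : Overpartition n //
        (π.overl.Nonempty ∧ P (π.ellNO + 1)) ∧ ¬π.movable.Nonempty} =
      Nat.card {p : n.Partition // P (p.parts.count p.parts.sup)} :=
  Nat.card_congr <| (Equiv.subtypeEquivRight fun _ => and_right_comm).trans <|
    (Equiv.subtypeSubtypeEquivSubtypeInter _ _).symm.trans <|
      (fixedEquiv hn).subtypeEquiv fun ⟨π, hov, hfix⟩ => by
        obtain ⟨s, hs, hle⟩ := exists_overl_eq_singleton hov hfix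
        exact iff_of_eq (congrArg P (count_sup_toPartition_parts hs hle).symm)

end FixedPoints

end Overpartition

theorem stmt_7 (n : ℕ) (hn : 1 ≤ n) :
    (Nat.card {π : Overpartition n // π.overl.Nonempty ∧
        Even (Multiset.card (π.plain.filter (fun x => ∃ y ∈ π.overl, y ≤ x)))} : ℤ) -
      Nat.card {π : Overpartition n // π.overl.Nonempty ∧
        Odd (Multiset.card (π.plain.filter (fun x => ∃ y ∈ π.overl, y ≤ x)))} =
    (Nat.card {p : n.Partition // Odd (p.parts.count p.parts.sup)} : ℤ) -
      Nat.card {p : n.Partition // Even (p.parts.count p.parts.sup)} := by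
  change (Nat.card {π : Overpartition n // π.overl.Nonempty ∧ Even π.ellNO} : ℤ) -
      Nat.card {π : Overpartition n // π.overl.Nonempty ∧ Odd π.ellNO} = _
  have hn₀ : n ≠ 0 := Nat.one_le_iff_ne_zero.mp hn
  have hE := Overpartition.card_fixed_eq hn₀ Odd
  have hO := Overpartition.card_fixed_eq hn₀ Even
  simp only [Nat.odd_add_one, Nat.not_odd_iff_even, Nat.even_add_one, Nat.not_even_iff_odd]
    at hE hO
  have hsplit (P : ℕ → Prop) := Nat.card_eq_card_and_add_card_and_not
    (fun π : Overpartition n => π.overl.Nonempty ∧ P π.ellNO) (·.movable.Nonempty)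
  rw [hsplit Even, hsplit Odd, Overpartition.card_movable_even_eq_card_movable_odd, hE, hO]
  push_cast
  ring
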